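/- Let N ≥ 2 be an integer, set x_i = y_i = (i−1)/(N−1) for i = 1, …, N and h = 1/(2(N−1)), and let φ_t(x) = (1/h)·ReLU(x − t + h) − (2/h)·ReLU(x − t) + (1/h)·ReLU(x − t − h). Let b ∈ [1, 2), define I₁(x, y) = Σ_{i : x_i ≥ 1/2} φ_{x_i}(x) + Σ_{j=1}^{N} φ_{y_j}(y) − b, I₂(x, y) = Σ_{i : x_i < 1/2} φ_{x_i}(x) + Σ_{j=1}^{N} φ_{y_j}(y) − b, and f₂(x, y) = ReLU(I₁(x, y))/(2 − b) − ReLU(I₂(x, y))/(2 − b). Then: (i) for all i, j ∈ {1, …, N}, f₂(x_i, y_j) = 1 if x_i ≥ 1/2 and f₂(x_i, y_j) = −1 if x_i < 1/2; and (ii) f₂(x, y) = 0 for every (x, y) ∈ ℝ² whose sup-norm distance to the grid {(x_i, y_j) : 1 ≤ i, j ≤ N} is at least (2 − b)·h. -/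
import Mathlib

noncomputable def relu (x : ℝ) : ℝ := max x 0

/-- The one-dimensional ReLU hat function of half-width `h` centered at `t`. -/
noncomputable def hat (h t x : ℝ) : ℝ :=
  (1 / h) * relu (x - t + h) - (2 / h) * relu (x - t) + (1 / h) * relu (x - t - h)

lemma relu_of_nonpos {x : ℝ} (hx : x ≤ 0) : relu x = 0 := max_eq_right hx
lemma relu_of_nonneg {x : ℝ} (hx : 0 ≤ x) : relu x = x := max_eq_left hx

lemma hat_eq {h : ℝ} (hh : 0 < h) (t x : ℝ) : hat h t x = max (1 - |x - t| / h) 0 := by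
  unfold hat
  rcases le_total (x - t) 0 with h2 | h2
  · rw [abs_of_nonpos h2]
    rcases le_total (x - t) (-h) with h1 | h1
    · rw [relu_of_nonpos (by linarith), relu_of_nonpos (by linarith),
        relu_of_nonpos (by linarith), max_eq_right]
      · ring
      · have : 1 ≤ -(x - t) / h := by rw [le_div_iff₀ hh]; linarith
        linarith
    · rw [relu_of_nonneg (by linarith), relu_of_nonpos (by linarith),
        relu_of_nonpos (by linarith), max_eq_left]
      · field_simp; ring
      · have : -(x - t) / h ≤ 1 := by rw [div_le_one hh]; linarith
        linarith
  · rw [abs_of_nonneg h2]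
    rcases le_total (x - t) h with h3 | h3
    · rw [relu_of_nonneg (by linarith), relu_of_nonneg (by linarith),
        relu_of_nonpos (by linarith), max_eq_left]
      · field_simp; ring
      · have : (x - t) / h ≤ 1 := by rw [div_le_one hh]; linarith
        linarith
    · rw [relu_of_nonneg (by linarith), relu_of_nonneg (by linarith),
        relu_of_nonneg (by linarith), max_eq_right]
      · field_simp; ring
      · have : 1 ≤ (x - t) / h := by rw [le_div_iff₀ hh]; linarith
        linarith

lemma hat_nonneg {h : ℝ} (hh : 0 < h) (t x : ℝ) : 0 ≤ hat h t x := by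
  rw [hat_eq hh]; exact le_max_right _ _

lemma hat_le_one {h : ℝ} (hh : 0 < h) (t x : ℝ) : hat h t x ≤ 1 := by
  rw [hat_eq hh]
  have : 0 ≤ |x - t| / h := div_nonneg (abs_nonneg _) hh.le
  exact max_le (by linarith) (by norm_num)

lemma hat_zero_of_far {h : ℝ} (hh : 0 < h) {t x : ℝ} (hf : h ≤ |x - t|) : hat h t x = 0 := by
  rw [hat_eq hh, max_eq_right]
  have : 1 ≤ |x - t| / h := by rw [le_div_iff₀ hh]; linarith
  linarith

lemma hat_self {h : ℝ} (hh : 0 < h) (t : ℝ) : hat h t t = 1 := by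
  rw [hat_eq hh]; simp

lemma abs_lt_of_hat_pos {h t x : ℝ} (hh : 0 < h) (hp : 0 < hat h t x) : |x - t| < h := by
  by_contra hc
  rw [hat_zero_of_far hh (le_of_not_gt hc)] at hp
  exact lt_irrefl 0 hp

lemma hat_eq_of_pos {h t x : ℝ} (hh : 0 < h) (hp : 0 < hat h t x) :
    hat h t x = 1 - |x - t| / h := by
  rw [hat_eq hh] at hp ⊢
  rcases max_cases (1 - |x - t| / h) (0 : ℝ) with ⟨e, _⟩ | ⟨e, _⟩
  · rw [e]
  · rw [e] at hp; exact absurd hp (lt_irrefl 0)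

lemma sum_hat_cases {h : ℝ} (hh : 0 < h) (x : ℕ → ℝ) {M : Finset ℕ}
    (hsp : ∀ j ∈ M, ∀ k ∈ M, j ≠ k → 2 * h ≤ |x j - x k|)
    {S : Finset ℕ} (hS : S ⊆ M) (t : ℝ) :
    (∑ j ∈ S, hat h (x j) t) = 0 ∨
    ∃ j ∈ S, (∑ k ∈ S, hat h (x k) t) = hat h (x j) t ∧ 0 < hat h (x j) t := by
  by_cases hz : ∀ j ∈ S, hat h (x j) t = 0
  · exact Or.inl (Finset.sum_eq_zero hz)
  · right
    push_neg at hz; obtain ⟨j, hjS, hj⟩ := hz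
    have hjp : 0 < hat h (x j) t := (hat_nonneg hh _ _).lt_of_ne (Ne.symm hj)
    refine ⟨j, hjS, ?_, hjp⟩
    refine Finset.sum_eq_single_of_mem j hjS (fun k hkS hkj => ?_)
    apply hat_zero_of_far hh
    have h1 := abs_lt_of_hat_pos hh hjp
    have h2 := hsp k (hS hkS) j (hS hjS) hkj
    have h3 : |x k - x j| ≤ |x k - t| + |t - x j| := abs_sub_le _ _ _
    have h4 : |x k - t| = |t - x k| := abs_sub_comm _ _
    linarith

lemma sum_hat_grid_mem {h : ℝ} (hh : 0 < h) (x : ℕ → ℝ) {M : Finset ℕ}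
    (hsp : ∀ j ∈ M, ∀ k ∈ M, j ≠ k → 2 * h ≤ |x j - x k|)
    {S : Finset ℕ} (hS : S ⊆ M) {i : ℕ} (hi : i ∈ S) :
    (∑ j ∈ S, hat h (x j) (x i)) = 1 := by
  rw [Finset.sum_eq_single_of_mem i hi (fun k hkS hki => ?_), hat_self hh]
  apply hat_zero_of_far hh
  have := hsp i (hS hi) k (hS hkS) (Ne.symm hki)
  linarith

lemma sum_hat_grid_notMem {h : ℝ} (hh : 0 < h) (x : ℕ → ℝ) {M : Finset ℕ}
    (hsp : ∀ j ∈ M, ∀ k ∈ M, j ≠ k → 2 * h ≤ |x j - x k|)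
    {S : Finset ℕ} (hS : S ⊆ M) {i : ℕ} (hiM : i ∈ M) (hi : i ∉ S) :
    (∑ j ∈ S, hat h (x j) (x i)) = 0 := by
  refine Finset.sum_eq_zero (fun k hkS => ?_)
  apply hat_zero_of_far hh
  have := hsp i hiM k (hS hkS) (fun e => hi (e ▸ hkS))
  linarith

/-- 2-D binary classification network on the `N × N` grid:
zero training loss yet output 0 away from the grid. -/
theorem stmt_6 (N : ℕ) (hN : 2 ≤ N)
    (x : ℕ → ℝ) (hx : ∀ i, x i = ((i : ℝ) - 1) / ((N : ℝ) - 1))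
    (h : ℝ) (hh : h = 1 / (2 * ((N : ℝ) - 1)))
    (b : ℝ) (hb : 1 ≤ b ∧ b < 2)
    (I₁ I₂ f₂ : ℝ → ℝ → ℝ)
    (hI₁ : ∀ s t, I₁ s t =
      (∑ i ∈ (Finset.Icc 1 N).filter (fun i => (1 : ℝ) / 2 ≤ x i), hat h (x i) s)
      + (∑ j ∈ Finset.Icc 1 N, hat h (x j) t) - b)
    (hI₂ : ∀ s t, I₂ s t =
      (∑ i ∈ (Finset.Icc 1 N).filter (fun i => x i < (1 : ℝ) / 2), hat h (x i) s)
      + (∑ j ∈ Finset.Icc 1 N, hat h (x j) t) - b)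
    (hf : ∀ s t, f₂ s t = relu (I₁ s t) / (2 - b) - relu (I₂ s t) / (2 - b)) :
    (∀ i ∈ Finset.Icc 1 N, ∀ j ∈ Finset.Icc 1 N,
      ((1 : ℝ) / 2 ≤ x i → f₂ (x i) (x j) = 1) ∧
      (x i < (1 : ℝ) / 2 → f₂ (x i) (x j) = -1)) ∧
    (∀ s t : ℝ,
      (∀ i ∈ Finset.Icc 1 N, ∀ j ∈ Finset.Icc 1 N,
        (2 - b) * h ≤ max |s - x i| |t - x j|) →
      f₂ s t = 0) := by
  have hN1 : (1 : ℝ) ≤ (N : ℝ) - 1 := by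
    have : (2 : ℝ) ≤ (N : ℝ) := by exact_mod_cast hN
    linarith
  have hh0 : 0 < h := by rw [hh]; positivity
  have h2b : 0 < 2 - b := by linarith [hb.2]
  -- spacing
  have hsp : ∀ j ∈ Finset.Icc 1 N, ∀ k ∈ Finset.Icc 1 N, j ≠ k → 2 * h ≤ |x j - x k| := by
    intro j _ k _ hjk
    have hd : x j - x k = ((j : ℝ) - (k : ℝ)) / ((N : ℝ) - 1) := by
      rw [hx j, hx k]; ring
    have h1 : (1 : ℝ) ≤ |(j : ℝ) - (k : ℝ)| := by
      rcases Nat.lt_or_ge j k with hl | hl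
      · rw [abs_of_nonpos (sub_nonpos.2 (by exact_mod_cast hl.le))]
        have : (j : ℝ) + 1 ≤ (k : ℝ) := by exact_mod_cast Nat.succ_le_of_lt hl
        linarith
      · have hl' : k < j := lt_of_le_of_ne hl (Ne.symm hjk)
        rw [abs_of_nonneg (sub_nonneg.2 (by exact_mod_cast hl'.le))]
        have : (k : ℝ) + 1 ≤ (j : ℝ) := by exact_mod_cast Nat.succ_le_of_lt hl'
        linarith
    rw [hd, abs_div, abs_of_nonneg (by linarith : (0:ℝ) ≤ (N : ℝ) - 1)]
    rw [hh]
    rw [le_div_iff₀ (by linarith : (0:ℝ) < (N : ℝ) - 1)]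
    have : 2 * (1 / (2 * ((N : ℝ) - 1))) * ((N : ℝ) - 1) = 1 := by
      field_simp
    rw [this]; exact h1
  constructor
  · -- part (i)
    intro i hi j hj
    have hT : (∑ k ∈ Finset.Icc 1 N, hat h (x k) (x j)) = 1 :=
      sum_hat_grid_mem hh0 x hsp (le_refl _) hj
    constructor
    · intro hge
      have hA1 : (∑ k ∈ (Finset.Icc 1 N).filter (fun i => (1 : ℝ) / 2 ≤ x i),
          hat h (x k) (x i)) = 1 :=
        sum_hat_grid_mem hh0 x hsp (Finset.filter_subset _ _)
          (Finset.mem_filter.2 ⟨hi, hge⟩)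
      have hA2 : (∑ k ∈ (Finset.Icc 1 N).filter (fun i => x i < (1 : ℝ) / 2),
          hat h (x k) (x i)) = 0 :=
        sum_hat_grid_notMem hh0 x hsp (Finset.filter_subset _ _) hi
          (fun hmem => absurd (Finset.mem_filter.1 hmem).2 (not_lt.2 hge))
      rw [hf, hI₁, hI₂, hA1, hA2, hT]
      rw [relu_of_nonneg (by linarith), relu_of_nonpos (by linarith [hb.1])]
      field_simp
      ring
    · intro hlt
      have hA1 : (∑ k ∈ (Finset.Icc 1 N).filter (fun i => (1 : ℝ) / 2 ≤ x i),
          hat h (x k) (x i)) = 0 :=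
        sum_hat_grid_notMem hh0 x hsp (Finset.filter_subset _ _) hi
          (fun hmem => absurd (Finset.mem_filter.1 hmem).2 (not_le.2 hlt))
      have hA2 : (∑ k ∈ (Finset.Icc 1 N).filter (fun i => x i < (1 : ℝ) / 2),
          hat h (x k) (x i)) = 1 :=
        sum_hat_grid_mem hh0 x hsp (Finset.filter_subset _ _)
          (Finset.mem_filter.2 ⟨hi, hlt⟩)
      rw [hf, hI₁, hI₂, hA1, hA2, hT]
      rw [relu_of_nonpos (by linarith [hb.1]), relu_of_nonneg (by linarith)]
      field_simp
      norm_num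
  · -- part (ii)
    intro s t hfar
    have key : ∀ S : Finset ℕ, S ⊆ Finset.Icc 1 N →
        (∑ i ∈ S, hat h (x i) s) + (∑ j ∈ Finset.Icc 1 N, hat h (x j) t) - b ≤ 0 := by
      intro S hS
      rcases sum_hat_cases hh0 x hsp hS s with hA0 | ⟨i, hiS, hAe, hAp⟩
      · rcases sum_hat_cases hh0 x hsp (le_refl (Finset.Icc 1 N)) t with hB0 | ⟨j, hjI, hBe, hBp⟩
        · rw [hA0, hB0]; linarith [hb.1]
        · rw [hA0, hBe]; linarith [hat_le_one hh0 (x j) t, hb.1]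
      · rcases sum_hat_cases hh0 x hsp (le_refl (Finset.Icc 1 N)) t with hB0 | ⟨j, hjI, hBe, hBp⟩
        · rw [hAe, hB0]; linarith [hat_le_one hh0 (x i) s, hb.1]
        · rw [hAe, hBe, hat_eq_of_pos hh0 hAp, hat_eq_of_pos hh0 hBp]
          have hfar' := hfar i (hS hiS) j hjI
          have hmx : max |s - x i| |t - x j| ≤ |s - x i| + |t - x j| :=
            max_le (le_add_of_nonneg_right (abs_nonneg _))
              (le_add_of_nonneg_left (abs_nonneg _))
          have hsum : (2 - b) * h ≤ |s - x i| + |t - x j| := le_trans hfar' hmx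
          have hdiv : 2 - b ≤ (|s - x i| + |t - x j|) / h := by
            rw [le_div_iff₀ hh0]; linarith
          rw [add_div] at hdiv
          linarith
    have h1 : I₁ s t ≤ 0 := by
      rw [hI₁]; exact key _ (Finset.filter_subset _ _)
    have h2 : I₂ s t ≤ 0 := by
      rw [hI₂]; exact key _ (Finset.filter_subset _ _)
    rw [hf, relu_of_nonpos h1, relu_of_nonpos h2]
    simp
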